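/- Let m, k ≥ 1, γ ∈ ℝ, let H be an m×m real matrix with I_m − H invertible, let F be an m×k real matrix, and let Q : ℕ → Matrix (Fin m) (Fin m) ℝ and F' : ℕ → Matrix (Fin m) (Fin k) ℝ be sequences satisfying (I_m − Q(t))·(I_m − H)^{−1}·F = γ·F'(t) for every t. Define Γ(T) := γ·F'(T) + γ·Σ_{j=1}^{T} ( Q(T)·Q(T−1)···Q(j) )·F'(j−1). Then Γ(T) = ( I_m − Q(T)·Q(T−1)···Q(0) )·(I_m − H)^{−1}·F for every T ∈ ℕ. Consequently, if the left products Q(T)·Q(T−1)···Q(0) converge entrywise to the zero matrix as T → ∞, then Γ(T) converges entrywise to (I_m − H)^{−1}·F. -/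

import Mathlib

open Filter Topology Matrix

/-!
Writing `M = (I - H)⁻¹ F`, the hypothesis reads `γ F'(t) = M - Q(t) M`. The accumulated input
`Γ` solves `Γ(T+1) = γ F'(T+1) + Q(T+1) Γ(T)`, and along this recursion the defect
`M - Γ(T)` is multiplied by `Q(T+1)` at each step; starting from `M - Γ(0) = Q(0) M`, it equals
`Q(T) ⋯ Q(0) M`. The limit statement follows by continuity of matrix multiplication.
-/

/-- Left product `Q(a+n-1) * ⋯ * Q(a+1) * Q(a)` of a matrix sequence over the `n` times
`a, a+1, …, a+n-1`; `blockProd Q a 0 = 1`. In particular `blockProd Q j (T - j + 1)` is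
`Q(T) ⋯ Q(j)` for `j ≤ T`, and `blockProd Q 0 (T + 1)` is `Q(T) ⋯ Q(0)`. -/
noncomputable def blockProd {m : ℕ} (Q : ℕ → Matrix (Fin m) (Fin m) ℝ) (a : ℕ) :
    ℕ → Matrix (Fin m) (Fin m) ℝ
  | 0 => 1
  | n + 1 => Q (a + n) * blockProd Q a n

theorem Matrix.one_sub_mul_mul {n p R : Type*} [Fintype n] [DecidableEq n] [Ring R]
    (P A : Matrix n n R) (B : Matrix n p R) : (1 - P) * A * B = A * B - P * (A * B) := by
  rw [Matrix.sub_mul, Matrix.sub_mul, Matrix.one_mul, Matrix.mul_assoc]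

theorem Matrix.tendsto_sub_mul_apply {ι n p : Type*} [Fintype n] {l : Filter ι}
    {P : ι → Matrix n n ℝ} (hP : ∀ i j, Tendsto (fun t => P t i j) l (𝓝 0)) (M : Matrix n p ℝ)
    (i : n) (j : p) : Tendsto (fun t => (M - P t * M) i j) l (𝓝 (M i j)) := by
  have hP' : Tendsto P l (𝓝 0) := tendsto_pi_nhds.2 fun i => tendsto_pi_nhds.2 (hP i)
  have hmul : Continuous fun A : Matrix n n ℝ => A * M := continuous_id.matrix_mul continuous_const
  have hlim : Tendsto (fun t => M - P t * M) l (𝓝 (M - (0 : Matrix n n ℝ) * M)) :=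
    tendsto_const_nhds.sub ((hmul.tendsto 0).comp hP')
  rw [Matrix.zero_mul, sub_zero] at hlim
  exact ((continuous_apply j).comp (continuous_apply i)).tendsto M |>.comp hlim

section

variable {m k : ℕ} (Q : ℕ → Matrix (Fin m) (Fin m) ℝ)

theorem blockProd_succ (a n : ℕ) : blockProd Q a (n + 1) = Q (a + n) * blockProd Q a n := rfl

theorem blockProd_succ_sub_add_one {j T : ℕ} (hj : j ≤ T) :
    blockProd Q j (T + 1 - j + 1) = Q (T + 1) * blockProd Q j (T - j + 1) := by
  rw [show T + 1 - j + 1 = T - j + 1 + 1 by omega, blockProd_succ,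
    show j + (T - j + 1) = T + 1 by omega]

-- The paper's `Γ(T)` is `accumInput Q (γ • F') T`.
noncomputable def accumInput (G : ℕ → Matrix (Fin m) (Fin k) ℝ) (T : ℕ) :
    Matrix (Fin m) (Fin k) ℝ :=
  G T + ∑ j ∈ Finset.Icc 1 T, blockProd Q j (T - j + 1) * G (j - 1)

theorem accumInput_zero (G : ℕ → Matrix (Fin m) (Fin k) ℝ) : accumInput Q G 0 = G 0 := by
  simp [accumInput]

theorem accumInput_succ (G : ℕ → Matrix (Fin m) (Fin k) ℝ) (T : ℕ) :
    accumInput Q G (T + 1) = G (T + 1) + Q (T + 1) * accumInput Q G T := by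
  have hsum : ∀ j ∈ Finset.Icc 1 T, blockProd Q j (T + 1 - j + 1) * G (j - 1)
      = Q (T + 1) * (blockProd Q j (T - j + 1) * G (j - 1)) := fun j hj => by
    rw [blockProd_succ_sub_add_one Q (by have := (Finset.mem_Icc.mp hj).2; omega),
      Matrix.mul_assoc]
  have hlast : blockProd Q (T + 1) (T + 1 - (T + 1) + 1) * G (T + 1 - 1) = Q (T + 1) * G T := by
    simp [blockProd]
  rw [accumInput, Finset.sum_Icc_succ_top (by omega), Finset.sum_congr rfl hsum, hlast,
    accumInput, Matrix.mul_add, Matrix.mul_sum]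
  abel

theorem accumInput_smul (c : ℝ) (G : ℕ → Matrix (Fin m) (Fin k) ℝ) (T : ℕ) :
    accumInput Q (c • G) T = c • accumInput Q G T := by
  simp only [accumInput, Pi.smul_apply, Matrix.mul_smul, Finset.smul_sum, smul_add]

theorem accumInput_eq_sub_blockProd_mul {G : ℕ → Matrix (Fin m) (Fin k) ℝ}
    {M : Matrix (Fin m) (Fin k) ℝ} (hG : ∀ t, G t = M - Q t * M) (T : ℕ) :
    accumInput Q G T = M - blockProd Q 0 (T + 1) * M := by
  induction T with
  | zero => simp [accumInput_zero, hG 0, blockProd]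
  | succ T ih =>
    rw [accumInput_succ, ih, hG, blockProd_succ Q 0 (T + 1), zero_add, Matrix.mul_sub,
      Matrix.mul_assoc]
    abel


end

theorem stmt7_general {m k : ℕ} (γ : ℝ)
    (H : Matrix (Fin m) (Fin m) ℝ)
    (F : Matrix (Fin m) (Fin k) ℝ)
    (Q : ℕ → Matrix (Fin m) (Fin m) ℝ)
    (F' : ℕ → Matrix (Fin m) (Fin k) ℝ)
    (hrel : ∀ t, (1 - Q t) * (1 - H)⁻¹ * F = γ • F' t)
    (Γ : ℕ → Matrix (Fin m) (Fin k) ℝ)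
    (hΓ : ∀ T, Γ T = γ • F' T +
      γ • ∑ j ∈ Finset.Icc 1 T, blockProd Q j (T - j + 1) * F' (j - 1)) :
    (∀ T, Γ T = (1 - blockProd Q 0 (T + 1)) * (1 - H)⁻¹ * F) ∧
      ((∀ i j, Tendsto (fun T => blockProd Q 0 (T + 1) i j) atTop (𝓝 0)) →
        ∀ i j, Tendsto (fun T => Γ T i j) atTop (𝓝 (((1 - H)⁻¹ * F) i j))) := by
  have hinput : ∀ t, (γ • F') t = (1 - H)⁻¹ * F - Q t * ((1 - H)⁻¹ * F) := fun t => by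
    rw [Pi.smul_apply, ← hrel, Matrix.one_sub_mul_mul]
  have hclosed : ∀ T, Γ T = (1 - H)⁻¹ * F - blockProd Q 0 (T + 1) * ((1 - H)⁻¹ * F) := by
    intro T
    rw [hΓ, ← smul_add, ← accumInput, ← accumInput_smul,
      accumInput_eq_sub_blockProd_mul Q hinput]
  refine ⟨fun T => ?_, fun hQ i j => ?_⟩
  · rw [hclosed, Matrix.one_sub_mul_mul]
  · simpa only [hclosed] using Matrix.tendsto_sub_mul_apply hQ ((1 - H)⁻¹ * F) i j

/-- Telescoping identity (29) and limit (15): if `(I - Q(t))(I - H)⁻¹ F = γ F'(t)` for all `t`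
and `Γ(T) = γ F'(T) + γ ∑_{j=1}^{T} (Q(T) ⋯ Q(j)) F'(j-1)`, then
`Γ(T) = (I - Q(T) ⋯ Q(0)) (I - H)⁻¹ F` for every `T`; consequently, if the left products
`Q(T) ⋯ Q(0)` converge entrywise to the zero matrix, then `Γ(T)` converges entrywise to
`(I - H)⁻¹ F`. -/
theorem stmt7 {m k : ℕ} (hm : 1 ≤ m) (hk : 1 ≤ k) (γ : ℝ)
    (H : Matrix (Fin m) (Fin m) ℝ) (hinv : IsUnit (1 - H))
    (F : Matrix (Fin m) (Fin k) ℝ)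
    (Q : ℕ → Matrix (Fin m) (Fin m) ℝ)
    (F' : ℕ → Matrix (Fin m) (Fin k) ℝ)
    (hrel : ∀ t, (1 - Q t) * (1 - H)⁻¹ * F = γ • F' t)
    (Γ : ℕ → Matrix (Fin m) (Fin k) ℝ)
    (hΓ : ∀ T, Γ T = γ • F' T +
      γ • ∑ j ∈ Finset.Icc 1 T, blockProd Q j (T - j + 1) * F' (j - 1)) :
    (∀ T, Γ T = (1 - blockProd Q 0 (T + 1)) * (1 - H)⁻¹ * F) ∧
      ((∀ i j, Tendsto (fun T => blockProd Q 0 (T + 1) i j) atTop (𝓝 0)) →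
        ∀ i j, Tendsto (fun T => Γ T i j) atTop (𝓝 (((1 - H)⁻¹ * F) i j))) :=
  stmt7_general γ H F Q F' hrel Γ hΓ
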